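/- arXiv:2204.03416 — 7 statements merged into one kernel-verified Lean document; each statement's English description precedes it below -/
import Mathlib

section
/- Let H₁ and H₂ be real Hilbert spaces, K : H₁ → H₂ a continuous linear operator, f ∈ H₂ nonzero, and suppose (γ_j, v_j, β_j, p_j)_{j≥1} is a non-terminating Golub–Kahan bidiagonalization (GKB) process for (K, f). Then the sequences (v_j)_{j≥1} and (p_j)_{j≥1} are orthonormal in H₂ and H₁ respectively: each v_j and each p_j has norm 1, ⟨v_i, v_j⟩ = 0 and ⟨p_i, p_j⟩ = 0 for all i ≠ j. -/
open Filter ContinuousLinearMap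

/-- A non-terminating Golub–Kahan bidiagonalization (GKB) process for `(K, f)`.
Index `j : ℕ` corresponds to the `(j+1)`-st element of the process in the paper
(i.e. `γ 0 = γ₁`, `v 0 = v₁`, etc.). All coefficients are strictly positive. -/
structure GKB {H₁ H₂ : Type*}
    [NormedAddCommGroup H₁] [InnerProductSpace ℝ H₁] [CompleteSpace H₁]
    [NormedAddCommGroup H₂] [InnerProductSpace ℝ H₂] [CompleteSpace H₂]
    (K : H₁ →L[ℝ] H₂) (f : H₂)
    (γ β : ℕ → ℝ) (v : ℕ → H₂) (p : ℕ → H₁) : Prop where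
  γ_pos : ∀ j, 0 < γ j
  β_pos : ∀ j, 0 < β j
  γ_zero : γ 0 = ‖f‖
  v_zero : γ 0 • v 0 = f
  β_zero : β 0 = ‖adjoint K (v 0)‖
  p_zero : β 0 • p 0 = adjoint K (v 0)
  γ_succ : ∀ j, γ (j + 1) = ‖K (p j) - β j • v j‖
  v_succ : ∀ j, γ (j + 1) • v (j + 1) = K (p j) - β j • v j
  β_succ : ∀ j, β (j + 1) = ‖adjoint K (v (j + 1)) - γ (j + 1) • p j‖
  p_succ : ∀ j, β (j + 1) • p (j + 1) = adjoint K (v (j + 1)) - γ (j + 1) • p j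

/-! Proof: each `v j`, `p j` is a vector divided by its own norm, hence a unit vector.
Orthogonality is proved by a joint induction on `n`: pairing the recurrence for
`γ (n+1) • v (n+1)` with an earlier `v i` and moving `K` across as `K†` expresses
`⟪v i, v (n+1)⟫` through `⟪K† v i, p n⟫` and `⟪v i, v n⟫`; since `K† v i` is a combination of
`p i` and `p (i-1)`, these vanish for `i < n` and cancel for `i = n`. The same argument with
the roles of `K` and `K†` exchanged handles `⟪p i, p (n+1)⟫`. -/

open scoped RealInnerProductSpace

theorem norm_eq_one_of_smul_eq_of_eq_norm {E : Type*} [NormedAddCommGroup E] [NormedSpace ℝ E]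
    {c : ℝ} {x y : E} (hc : 0 < c) (h : c • x = y) (hy : c = ‖y‖) : ‖x‖ = 1 := by
  refine mul_left_cancel₀ hc.ne' ?_
  calc c * ‖x‖ = ‖c • x‖ := by rw [norm_smul, Real.norm_of_nonneg hc.le]
    _ = c * 1 := by rw [h, ← hy, mul_one]

theorem Orthonormal.of_inner_eq_zero_of_lt {ι E : Type*} [LinearOrder ι]
    [NormedAddCommGroup E] [InnerProductSpace ℝ E] {u : ι → E} (hnorm : ∀ i, ‖u i‖ = 1)
    (horth : ∀ i j, i < j → ⟪u i, u j⟫ = 0) : Orthonormal ℝ u := by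
  refine ⟨hnorm, fun i j hij => ?_⟩
  rcases hij.lt_or_gt with h | h
  · exact horth i j h
  · rw [real_inner_comm]
    exact horth j i h

namespace GKB

variable {H₁ H₂ : Type*}
  [NormedAddCommGroup H₁] [InnerProductSpace ℝ H₁] [CompleteSpace H₁]
  [NormedAddCommGroup H₂] [InnerProductSpace ℝ H₂] [CompleteSpace H₂]
  {K : H₁ →L[ℝ] H₂} {f : H₂} {γ β : ℕ → ℝ} {v : ℕ → H₂} {p : ℕ → H₁}

theorem norm_v (h : GKB K f γ β v p) (j : ℕ) : ‖v j‖ = 1 := by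
  cases j with
  | zero => exact norm_eq_one_of_smul_eq_of_eq_norm (h.γ_pos 0) h.v_zero h.γ_zero
  | succ j => exact norm_eq_one_of_smul_eq_of_eq_norm (h.γ_pos _) (h.v_succ j) (h.γ_succ j)

theorem norm_p (h : GKB K f γ β v p) (j : ℕ) : ‖p j‖ = 1 := by
  cases j with
  | zero => exact norm_eq_one_of_smul_eq_of_eq_norm (h.β_pos 0) h.p_zero h.β_zero
  | succ j => exact norm_eq_one_of_smul_eq_of_eq_norm (h.β_pos _) (h.p_succ j) (h.β_succ j)

theorem apply_p (h : GKB K f γ β v p) (j : ℕ) :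
    K (p j) = γ (j + 1) • v (j + 1) + β j • v j := by
  rw [h.v_succ j, sub_add_cancel]

theorem adjoint_v_succ (h : GKB K f γ β v p) (j : ℕ) :
    adjoint K (v (j + 1)) = β (j + 1) • p (j + 1) + γ (j + 1) • p j := by
  rw [h.p_succ j, sub_add_cancel]

theorem inner_adjoint_v_p_of_lt (h : GKB K f γ β v p) {i n : ℕ}
    (hp : ∀ k < n, ⟪p k, p n⟫ = 0) (hi : i < n) : ⟪adjoint K (v i), p n⟫ = 0 := by
  cases i with
  | zero => rw [← h.p_zero, real_inner_smul_left, hp 0 hi, mul_zero]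
  | succ i =>
    rw [h.adjoint_v_succ i, inner_add_left, real_inner_smul_left, real_inner_smul_left,
      hp (i + 1) hi, hp i (by omega), mul_zero, mul_zero, add_zero]

theorem inner_adjoint_v_p_self (h : GKB K f γ β v p) {n : ℕ}
    (hp : ∀ k < n, ⟪p k, p n⟫ = 0) : ⟪adjoint K (v n), p n⟫ = β n := by
  cases n with
  | zero => rw [← h.p_zero, real_inner_smul_left, real_inner_self_eq_norm_sq, h.norm_p, one_pow,
      mul_one]
  | succ n =>
    rw [h.adjoint_v_succ n, inner_add_left, real_inner_smul_left, real_inner_smul_left,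
      real_inner_self_eq_norm_sq, h.norm_p, hp n n.lt_succ_self, one_pow, mul_one, mul_zero,
      add_zero]

theorem inner_v_v_succ_of_le (h : GKB K f γ β v p) {n : ℕ}
    (hv : ∀ k < n, ⟪v k, v n⟫ = 0) (hp : ∀ k < n, ⟪p k, p n⟫ = 0) {i : ℕ} (hi : i ≤ n) :
    ⟪v i, v (n + 1)⟫ = 0 := by
  have key : γ (n + 1) * ⟪v i, v (n + 1)⟫ = ⟪adjoint K (v i), p n⟫ - β n * ⟪v i, v n⟫ := by
    rw [← real_inner_smul_right, h.v_succ n, inner_sub_right, real_inner_smul_right,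
      adjoint_inner_left]
  refine (mul_eq_zero.mp ?_).resolve_left (h.γ_pos (n + 1)).ne'
  rcases hi.lt_or_eq with hi | rfl
  · rw [key, h.inner_adjoint_v_p_of_lt hp hi, hv i hi, mul_zero, sub_zero]
  · rw [key, h.inner_adjoint_v_p_self hp, real_inner_self_eq_norm_sq, h.norm_v, one_pow,
      mul_one, sub_self]

theorem inner_p_p_succ_of_le (h : GKB K f γ β v p) {n : ℕ}
    (hv : ∀ k ≤ n, ⟪v k, v (n + 1)⟫ = 0) (hp : ∀ k < n, ⟪p k, p n⟫ = 0) {i : ℕ} (hi : i ≤ n) :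
    ⟪p i, p (n + 1)⟫ = 0 := by
  have key : β (n + 1) * ⟪p i, p (n + 1)⟫ =
      γ (i + 1) * ⟪v (i + 1), v (n + 1)⟫ + β i * ⟪v i, v (n + 1)⟫ - γ (n + 1) * ⟪p i, p n⟫ := by
    rw [← real_inner_smul_right, h.p_succ n, inner_sub_right, real_inner_smul_right,
      adjoint_inner_right, h.apply_p i, inner_add_left, real_inner_smul_left,
      real_inner_smul_left]
  refine (mul_eq_zero.mp ?_).resolve_left (h.β_pos (n + 1)).ne'
  rcases hi.lt_or_eq with hi | rfl
  · rw [key, hv (i + 1) hi, hv i hi.le, hp i hi]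
    ring
  · rw [key, hv i le_rfl, real_inner_self_eq_norm_sq, h.norm_v, real_inner_self_eq_norm_sq,
      h.norm_p]
    ring

theorem inner_eq_zero_of_lt (h : GKB K f γ β v p) (n : ℕ) :
    (∀ i < n, ⟪v i, v n⟫ = 0) ∧ (∀ i < n, ⟪p i, p n⟫ = 0) := by
  induction n with
  | zero => simp
  | succ n ih =>
    have hv : ∀ i ≤ n, ⟪v i, v (n + 1)⟫ = 0 := fun i => h.inner_v_v_succ_of_le ih.1 ih.2
    exact ⟨fun i hi => hv i (Nat.le_of_lt_succ hi),
      fun i hi => h.inner_p_p_succ_of_le hv ih.2 (Nat.le_of_lt_succ hi)⟩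

end GKB

theorem stmt_1_general
    {H₁ H₂ : Type*}
    [NormedAddCommGroup H₁] [InnerProductSpace ℝ H₁] [CompleteSpace H₁]
    [NormedAddCommGroup H₂] [InnerProductSpace ℝ H₂] [CompleteSpace H₂]
    (K : H₁ →L[ℝ] H₂) (f : H₂)
    (γ β : ℕ → ℝ) (v : ℕ → H₂) (p : ℕ → H₁)
    (hGKB : GKB K f γ β v p) :
    Orthonormal ℝ v ∧ Orthonormal ℝ p :=
  ⟨.of_inner_eq_zero_of_lt hGKB.norm_v fun i j hij => (hGKB.inner_eq_zero_of_lt j).1 i hij,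
    .of_inner_eq_zero_of_lt hGKB.norm_p fun i j hij => (hGKB.inner_eq_zero_of_lt j).2 i hij⟩

/-- the sequences `(v j)` and `(p j)` produced by a non-terminating GKB
process are orthonormal in `H₂` and `H₁` respectively. -/
theorem stmt_1
    {H₁ H₂ : Type*}
    [NormedAddCommGroup H₁] [InnerProductSpace ℝ H₁] [CompleteSpace H₁]
    [NormedAddCommGroup H₂] [InnerProductSpace ℝ H₂] [CompleteSpace H₂]
    (K : H₁ →L[ℝ] H₂) (f : H₂) (hf : f ≠ 0)
    (γ β : ℕ → ℝ) (v : ℕ → H₂) (p : ℕ → H₁)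
    (hGKB : GKB K f γ β v p) :
    Orthonormal ℝ v ∧ Orthonormal ℝ p :=
  stmt_1_general K f γ β v p hGKB
end

section
/- Let H₁ and H₂ be real Hilbert spaces and A : H₁ → H₂ a continuous linear operator. If (φ_n)_{n≥1} is a bounded sequence in H₁ and g ∈ H₂ is such that ‖A φ_n − g‖ → 0 as n → ∞, then g belongs to the range of A, i.e., there exists φ ∈ H₁ with A φ = g. -/
/-!
Through the Riesz isomorphism, Banach–Alaoglu makes closed balls of a Hilbert space weakly
compact. Hence `A '' closedBall 0 C` is weakly compact, so weakly closed; being convex, it is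
norm closed by Mazur's theorem. It contains every `A (φ n)`, hence their norm limit `g`.
-/

open Filter Metric

section

open InnerProductSpace

variable {𝕜 H : Type*} [RCLike 𝕜] [NormedAddCommGroup H] [InnerProductSpace 𝕜 H] [CompleteSpace H]

theorem continuous_toWeakSpace_toDual_symm :
    Continuous fun f : WeakDual 𝕜 H =>
      toWeakSpace 𝕜 H ((toDual 𝕜 H).symm (WeakDual.toStrongDual f)) := by
  refine WeakBilin.continuous_of_continuous_eval _ fun ℓ => ?_
  refine (RCLike.continuous_conj.comp (WeakDual.eval_continuous ((toDual 𝕜 H).symm ℓ))).congr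
    fun f => ?_
  change starRingEnd 𝕜 (f ((toDual 𝕜 H).symm ℓ)) = ℓ ((toDual 𝕜 H).symm (WeakDual.toStrongDual f))
  rw [← toDual_symm_apply, ← inner_conj_symm, toDual_symm_apply]
  rfl

theorem isCompact_toWeakSpace_closedBall (r : ℝ) :
    IsCompact (toWeakSpace 𝕜 H '' closedBall 0 r) := by
  have hball : (toDual 𝕜 H).symm '' closedBall 0 r = closedBall 0 r := by
    simp [(toDual 𝕜 H).symm.image_closedBall]
  convert (WeakDual.isCompact_closedBall (0 : StrongDual 𝕜 H) r).image
    continuous_toWeakSpace_toDual_symm using 1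
  conv_lhs =>
    rw [← hball, ← Set.image_preimage_eq (closedBall 0 r) WeakDual.toStrongDual.surjective]
  simp only [Set.image_image]

end

theorem ContinuousLinearMap.isClosed_image_closedBall {H E : Type*} [NormedAddCommGroup H]
    [InnerProductSpace ℝ H] [CompleteSpace H] [NormedAddCommGroup E] [NormedSpace ℝ E]
    (A : H →L[ℝ] E) (r : ℝ) : IsClosed (A '' closedBall 0 r) := by
  set K := A '' closedBall 0 r
  have hK : IsCompact (toWeakSpace ℝ E '' K) := by
    convert (isCompact_toWeakSpace_closedBall r).image (WeakSpace.map A).continuous using 1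
    simp only [K, Set.image_image]
    rfl
  have hweak : toWeakSpace ℝ E '' closure K = toWeakSpace ℝ E '' K := by
    have hKconv : Convex ℝ K := (convex_closedBall 0 r).linear_image A.toLinearMap
    rw [hKconv.toWeakSpace_closure ℝ, hK.isClosed.closure_eq]
  rw [← closure_subset_iff_isClosed]
  intro y hy
  exact (toWeakSpace ℝ E).injective.mem_set_image.mp (hweak ▸ Set.mem_image_of_mem _ hy)

theorem stmt_5_general
    {H₁ H₂ : Type*}
    [NormedAddCommGroup H₁] [InnerProductSpace ℝ H₁] [CompleteSpace H₁]
    [NormedAddCommGroup H₂] [InnerProductSpace ℝ H₂]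
    (A : H₁ →L[ℝ] H₂) (φ : ℕ → H₁) (g : H₂)
    (hbdd : ∃ C : ℝ, ∀ n, ‖φ n‖ ≤ C)
    (hconv : Tendsto (fun n => ‖A (φ n) - g‖) atTop (nhds 0)) :
    ∃ x : H₁, A x = g := by
  obtain ⟨C, hC⟩ := hbdd
  have hlim : Tendsto (fun n => A (φ n)) atTop (nhds g) :=
    tendsto_iff_norm_sub_tendsto_zero.mpr hconv
  obtain ⟨x, -, hx⟩ := (A.isClosed_image_closedBall C).mem_of_tendsto hlim
    (Eventually.of_forall fun n => ⟨φ n, mem_closedBall_zero_iff.mpr (hC n), rfl⟩)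
  exact ⟨x, hx⟩

/-- if `A : H₁ → H₂` is a continuous linear operator between real Hilbert
spaces, `(φ n)` is a bounded sequence and `‖A (φ n) - g‖ → 0`, then `g` is in the range
of `A`. -/
theorem stmt_5
    {H₁ H₂ : Type*}
    [NormedAddCommGroup H₁] [InnerProductSpace ℝ H₁] [CompleteSpace H₁]
    [NormedAddCommGroup H₂] [InnerProductSpace ℝ H₂] [CompleteSpace H₂]
    (A : H₁ →L[ℝ] H₂) (φ : ℕ → H₁) (g : H₂)
    (hbdd : ∃ C : ℝ, ∀ n, ‖φ n‖ ≤ C)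
    (hconv : Tendsto (fun n => ‖A (φ n) - g‖) atTop (nhds 0)) :
    ∃ x : H₁, A x = g :=
  stmt_5_general A φ g hbdd hconv
end

section
/- Let H₁ and H₂ be real Hilbert spaces, A : H₁ → H₂ a continuous linear operator, and g ∈ H₂ an element that does NOT belong to the range of A. Then every sequence (φ_n)_{n≥1} in H₁ satisfying ‖A φ_n − g‖ → 0 blows up, i.e., ‖φ_n‖ → +∞ as n → ∞. -/
/-!
A bounded operator on a Hilbert space maps closed bounded convex sets to closed sets. If `y` lies
in the closure of `A '' s`, the sets `s ∩ A ⁻¹' closedBall y (1 / (n + 1))` are nested, nonempty,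
closed and convex; their minimal-norm points form a Cauchy sequence, because the minimal-norm point
`v` of a convex set satisfies `‖w - v‖² ≤ ‖w‖² - ‖v‖²` on it, and the limit `x` has `A x = y`.
Hence if `‖φ n‖ < C` infinitely often, `g` would lie in the closed set `A '' closedBall 0 C`.
-/

open Filter Metric

theorem exists_mem_forall_norm_sub_sq_le {E : Type*} [NormedAddCommGroup E]
    [InnerProductSpace ℝ E] {K : Set E} (hne : K.Nonempty) (hK : IsComplete K)
    (hconv : Convex ℝ K) : ∃ v ∈ K, ∀ w ∈ K, ‖w - v‖ ^ 2 ≤ ‖w‖ ^ 2 - ‖v‖ ^ 2 := by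
  obtain ⟨v, hvK, hv⟩ := exists_norm_eq_iInf_of_complete_convex hne hK hconv 0
  refine ⟨v, hvK, fun w hw => ?_⟩
  have hinner : 0 ≤ inner ℝ v (w - v) := by
    simpa [inner_neg_left] using (norm_eq_iInf_iff_real_inner_le_zero hconv hvK).1 hv w hw
  have hsplit : ‖w‖ ^ 2 = ‖v‖ ^ 2 + 2 * inner ℝ v (w - v) + ‖w - v‖ ^ 2 := by
    rw [← norm_add_sq_real, add_sub_cancel]
  linarith

theorem cauchySeq_of_norm_sub_sq_le {E : Type*} [SeminormedAddCommGroup E] {v : ℕ → E}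
    (hbdd : BddAbove (Set.range fun n => ‖v n‖))
    (hv : ∀ m n, m ≤ n → ‖v n - v m‖ ^ 2 ≤ ‖v n‖ ^ 2 - ‖v m‖ ^ 2) : CauchySeq v := by
  have hmono : Monotone fun n => ‖v n‖ ^ 2 := fun m n hmn => by
    linarith [hv m n hmn, sq_nonneg ‖v n - v m‖]
  have hbdd_sq : BddAbove (Set.range fun n => ‖v n‖ ^ 2) := by
    obtain ⟨C, hC⟩ := hbdd
    refine ⟨C ^ 2, ?_⟩
    rintro _ ⟨n, rfl⟩
    exact pow_le_pow_left₀ (norm_nonneg _) (hC ⟨n, rfl⟩) 2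
  have hcauchy : CauchySeq fun n => ‖v n‖ ^ 2 := (tendsto_atTop_ciSup hmono hbdd_sq).cauchySeq
  rw [Metric.cauchySeq_iff'] at hcauchy ⊢
  intro ε hε
  obtain ⟨N, hN⟩ := hcauchy (ε ^ 2) (by positivity)
  refine ⟨N, fun n hn => ?_⟩
  have hsq : ‖v n - v N‖ ^ 2 < ε ^ 2 := by
    have := hN n hn
    rw [Real.dist_eq] at this
    linarith [hv N n hn, le_abs_self (‖v n‖ ^ 2 - ‖v N‖ ^ 2)]
  rw [dist_eq_norm]
  exact lt_of_pow_lt_pow_left₀ 2 hε.le hsq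

theorem nonempty_iInter_of_antitone_convex {E : Type*} [NormedAddCommGroup E]
    [InnerProductSpace ℝ E] [CompleteSpace E] {K : ℕ → Set E} (hanti : Antitone K)
    (hne : ∀ n, (K n).Nonempty) (hclosed : ∀ n, IsClosed (K n)) (hconv : ∀ n, Convex ℝ (K n))
    (hbdd : Bornology.IsBounded (K 0)) : (⋂ n, K n).Nonempty := by
  choose v hvK hvmin using fun n =>
    exists_mem_forall_norm_sub_sq_le (hne n) (hclosed n).isComplete (hconv n)
  obtain ⟨C, hC⟩ := hbdd.exists_norm_le
  have hbdd_v : BddAbove (Set.range fun n => ‖v n‖) := by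
    refine ⟨C, ?_⟩
    rintro _ ⟨n, rfl⟩
    exact hC _ (hanti (Nat.zero_le n) (hvK n))
  have hcauchy : CauchySeq v :=
    cauchySeq_of_norm_sub_sq_le hbdd_v fun m n hmn => hvmin m (v n) (hanti hmn (hvK n))
  obtain ⟨x, hx⟩ := cauchySeq_tendsto_of_complete hcauchy
  refine ⟨x, Set.mem_iInter.2 fun n => (hclosed n).mem_of_tendsto hx ?_⟩
  filter_upwards [eventually_ge_atTop n] with k hk
  exact hanti hk (hvK k)

theorem ContinuousLinearMap.isClosed_image_of_convex_of_isBounded {E F : Type*}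
    [NormedAddCommGroup E] [InnerProductSpace ℝ E] [CompleteSpace E]
    [NormedAddCommGroup F] [NormedSpace ℝ F] (A : E →L[ℝ] F) {s : Set E} (hclosed : IsClosed s)
    (hconv : Convex ℝ s) (hbdd : Bornology.IsBounded s) : IsClosed (A '' s) := by
  refine isClosed_of_closure_subset fun y hy => ?_
  set K : ℕ → Set E := fun n => s ∩ A ⁻¹' closedBall y (1 / (n + 1))
  have hanti : Antitone K := fun m n hmn =>
    Set.inter_subset_inter_right _ <| Set.preimage_mono <|
      closedBall_subset_closedBall (Nat.one_div_le_one_div hmn)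
  have hne : ∀ n, (K n).Nonempty := fun n => by
    obtain ⟨_, ⟨x, hxs, rfl⟩, hdist⟩ := mem_closure_iff.1 hy _ Nat.one_div_pos_of_nat
    exact ⟨x, hxs, by rw [Set.mem_preimage, mem_closedBall, dist_comm]; exact hdist.le⟩
  obtain ⟨x, hx⟩ := nonempty_iInter_of_antitone_convex hanti hne
    (fun n => hclosed.inter (isClosed_closedBall.preimage A.continuous))
    (fun n => hconv.inter ((convex_closedBall _ _).linear_preimage A.toLinearMap))
    (hbdd.subset Set.inter_subset_left)
  have hxK : ∀ n, x ∈ K n := Set.mem_iInter.1 hx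
  refine ⟨x, (hxK 0).1, eq_of_forall_dist_le fun ε hε => ?_⟩
  obtain ⟨n, hn⟩ := exists_nat_one_div_lt hε
  exact ((hxK n).2 : dist (A x) y ≤ _).trans hn.le

theorem stmt_6_general
    {H₁ H₂ : Type*}
    [NormedAddCommGroup H₁] [InnerProductSpace ℝ H₁] [CompleteSpace H₁]
    [NormedAddCommGroup H₂] [InnerProductSpace ℝ H₂]
    (A : H₁ →L[ℝ] H₂) (g : H₂) (hg : ∀ x : H₁, A x ≠ g) :
    ∀ φ : ℕ → H₁, Tendsto (fun n => ‖A (φ n) - g‖) atTop (nhds 0) →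
      Tendsto (fun n => ‖φ n‖) atTop atTop := by
  intro φ hφ
  by_contra hblow
  obtain ⟨C, hC⟩ : ∃ C, ∃ᶠ n in atTop, ‖φ n‖ < C := by
    simpa only [Filter.tendsto_atTop, not_forall, not_le, not_eventually] using hblow
  have hg_mem : g ∈ closure (A '' closedBall 0 C) :=
    mem_closure_of_frequently_of_tendsto
      (hC.mono fun n hn => Set.mem_image_of_mem A (mem_closedBall_zero_iff.2 hn.le))
      (tendsto_iff_norm_sub_tendsto_zero.2 hφ)
  have hclosed : IsClosed (A '' closedBall 0 C) :=
    A.isClosed_image_of_convex_of_isBounded isClosed_closedBall (convex_closedBall 0 C)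
      isBounded_closedBall
  obtain ⟨x, -, hx⟩ := hclosed.closure_subset hg_mem
  exact hg x hx

/-- if `g` is not in the range of the continuous linear operator `A`, then
every sequence `(φ n)` with `‖A (φ n) - g‖ → 0` blows up: `‖φ n‖ → +∞`. -/
theorem stmt_6
    {H₁ H₂ : Type*}
    [NormedAddCommGroup H₁] [InnerProductSpace ℝ H₁] [CompleteSpace H₁]
    [NormedAddCommGroup H₂] [InnerProductSpace ℝ H₂] [CompleteSpace H₂]
    (A : H₁ →L[ℝ] H₂) (g : H₂) (hg : ∀ x : H₁, A x ≠ g) :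
    ∀ φ : ℕ → H₁, Tendsto (fun n => ‖A (φ n) - g‖) atTop (nhds 0) →
      Tendsto (fun n => ‖φ n‖) atTop atTop :=
  stmt_6_general A g hg
end

section
/- Let H₁ and H₂ be real Hilbert spaces, K : H₁ → H₂ a compact injective continuous linear operator, φ† ∈ H₁, and f = K φ†. For each k ≥ 1 let 𝕂_k denote the Krylov subspace spanned by {(K*K)^j (K* f) : 0 ≤ j ≤ k−1}, and let φ_k ∈ 𝕂_k be a minimizer of ‖K φ − f‖ over φ ∈ 𝕂_k (such a minimizer exists and is unique since K is injective and 𝕂_k is finite-dimensional). Then φ_k converges to φ† in the norm of H₁ as k → ∞. -/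
open Filter ContinuousLinearMap

/-!
The minimizers are the conjugate gradient iterates for the normal equation `K* K φ = K* f`:
the residual `r_k = K* f - K* K φ_k` is orthogonal to `𝕂_k`. Writing `d_k = φ_{k+1} - φ_k`, the
CG recursion `d_{k+1} = s d_k + c r_{k+1}` has `s ≥ 0`, and `r_{k+1} ⊥ d_i` for `i ≤ k`, so the
steps satisfy `⟪d_i, d_n⟫ ≥ 0`. As `K* K` is injective, `φ†` lies in the closure of `⋃ 𝕂_k`, so
`K φ_k → f` and `r_k → 0`; since each `d_i` lies in the range of `K* K`, this gives
`⟪d_i, φ† - φ_k⟫ ≥ 0` and hence `‖φ_k‖² ≤ ⟪φ_k, φ†⟫`. The `φ_k` are thus bounded, converge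
weakly to `φ†` (the range of `K* K` is dense), and `‖φ_k - φ†‖² ≤ ⟪φ† - φ_k, φ†⟫ → 0`.
-/

open scoped RealInnerProductSpace Topology NNReal

theorem tendsto_comp_of_forall_dist_le {X Y : Type*} [TopologicalSpace X] [PseudoMetricSpace Y]
    {f : X → Y} {c : X} (hf : ContinuousAt f c) {V : ℕ → Set X} (hV : Monotone V)
    (hc : c ∈ closure (⋃ k, V k)) {x : ℕ → X}
    (hx : ∀ᶠ k in atTop, ∀ ψ ∈ V k, dist (f (x k)) (f c) ≤ dist (f ψ) (f c)) :
    Tendsto (f ∘ x) atTop (𝓝 (f c)) := by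
  refine Metric.tendsto_nhds.mpr fun ε hε => ?_
  obtain ⟨ψ, hψ, hψV⟩ := mem_closure_iff_nhds.mp hc _ (hf (Metric.ball_mem_nhds _ hε))
  obtain ⟨k₀, hk₀⟩ := Set.mem_iUnion.mp hψV
  filter_upwards [hx, eventually_ge_atTop k₀] with k hk hk₀k
  exact (hk ψ (hV hk₀k hk₀)).trans_lt hψ

section InnerProductSpace

variable {E : Type*} [NormedAddCommGroup E] [InnerProductSpace ℝ E]

theorem inner_sub_apply_eq_zero_of_forall_norm_le {F : Type*} [NormedAddCommGroup F]
    [InnerProductSpace ℝ F] (T : E →ₗ[ℝ] F) {W : Submodule ℝ E} {y : E} (hy : y ∈ W) {f : F}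
    (hmin : ∀ ψ ∈ W, ‖T y - f‖ ≤ ‖T ψ - f‖) {v : E} (hv : v ∈ W) : ⟪f - T y, T v⟫ = 0 := by
  refine ((W.map T).norm_eq_iInf_iff_real_inner_eq_zero (Submodule.mem_map_of_mem hy)).mp ?_ _
    (Submodule.mem_map_of_mem hv)
  have : Nonempty (W.map T : Set F) := ⟨⟨0, (W.map T).zero_mem⟩⟩
  refine le_antisymm (le_ciInf fun ⟨w, hw⟩ => ?_) ?_
  · obtain ⟨ψ, hψ, rfl⟩ := hw
    simpa only [norm_sub_rev f] using hmin ψ hψ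
  · refine ciInf_le ?_ (⟨T y, Submodule.mem_map_of_mem hy⟩ : (W.map T : Set F))
    exact ⟨0, Set.forall_mem_range.mpr fun _ => norm_nonneg _⟩

theorem tendsto_inner_of_dense {y : ℕ → E} {C : ℝ≥0} (hy : ∀ k, ‖y k‖ ≤ C) {S : Set E}
    (hS : Dense S) (h : ∀ v ∈ S, Tendsto (fun k => ⟪y k, v⟫) atTop (𝓝 0)) (w : E) :
    Tendsto (fun k => ⟪y k, w⟫) atTop (𝓝 0) := by
  have hequi : Equicontinuous fun k v => ⟪y k, v⟫ :=
    (LipschitzWith.uniformEquicontinuous _ C fun k =>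
      (innerSL ℝ (y k)).lipschitz.weaken (by simpa [← NNReal.coe_le_coe] using hy k)).equicontinuous
  exact (hequi.isClosed_setOfPred_tendsto continuous_const).closure_subset_iff.mpr h (hS w)

end InnerProductSpace

namespace ContinuousLinearMap

section Krylov

variable {R M : Type*} [Semiring R] [AddCommMonoid M] [Module R M] [TopologicalSpace M]
  (A : M →L[R] M) (b : M)

def krylov (k : ℕ) : Submodule R M :=
  Submodule.span R ((fun j => (A ^ j) b) '' Set.Iio k)

@[simp]
theorem krylov_zero : A.krylov b 0 = ⊥ := by
  simp [krylov]

theorem krylov_mono : Monotone (A.krylov b) := fun _ _ hkm =>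
  Submodule.span_mono (Set.image_mono (Set.Iio_subset_Iio hkm))

theorem krylov_succ (k : ℕ) :
    A.krylov b (k + 1) =
      Submodule.span R (insert ((A ^ k) b) ((fun j => (A ^ j) b) '' Set.Iio k)) := by
  rw [krylov, ← Order.succ_eq_add_one, Order.Iio_succ_eq_insert, Set.image_insert_eq]

theorem self_mem_krylov_succ (k : ℕ) : b ∈ A.krylov b (k + 1) :=
  Submodule.subset_span ⟨0, by simp, by simp⟩

theorem map_krylov_le (k : ℕ) : (A.krylov b k).map (A : M →ₗ[R] M) ≤ A.krylov b (k + 1) := by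
  rw [krylov, Submodule.map_span, ← Set.image_comp]
  refine Submodule.span_mono ?_
  rintro _ ⟨j, hj, rfl⟩
  exact ⟨j + 1, by simpa using hj, by simp [pow_succ']⟩

theorem krylov_apply (c : M) (k : ℕ) :
    A.krylov (A c) k = (A.krylov c k).map (A : M →ₗ[R] M) := by
  rw [krylov, krylov, Submodule.map_span, ← Set.image_comp]
  congr 2
  funext j
  simpa only [Function.comp_apply, coe_coe, pow_apply_eq_iterate] using
    Function.Commute.iterate_self A j c

theorem krylov_succ_le_sup_of_notMem {K V : Type*} [DivisionRing K] [AddCommGroup V] [Module K V]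
    [TopologicalSpace V] (A : V →L[K] V) (b : V) {k : ℕ} {y : V} (hy : y ∈ A.krylov b (k + 1))
    (hy' : y ∉ A.krylov b k) : A.krylov b (k + 1) ≤ A.krylov b k ⊔ K ∙ y := by
  rw [krylov_succ] at hy ⊢
  rw [krylov, sup_comm, ← Submodule.span_insert]
  exact Submodule.span_le.mpr <| Set.insert_subset_iff.mpr
    ⟨mem_span_insert_exchange hy hy', (Set.subset_insert _ _).trans Submodule.subset_span⟩

end Krylov

section Definite

variable {E : Type*} [NormedAddCommGroup E] [InnerProductSpace ℝ E] {A : E →L[ℝ] E}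

theorem mem_of_apply_mem (hdef : ∀ u, ⟪A u, u⟫ = 0 → u = 0) {N : Submodule ℝ E}
    [N.HasOrthogonalProjection] (hN : ∀ u ∈ N, A u ∈ N) {c : E} (hc : A c ∈ N) : c ∈ N := by
  obtain ⟨u, hu, z, hz, rfl⟩ := N.exists_add_mem_mem_orthogonal c
  have hAz : A z ∈ N := by simpa using N.sub_mem hc (hN u hu)
  rwa [hdef z (Submodule.inner_right_of_mem_orthogonal hAz hz), add_zero]

theorem mem_closure_iUnion_krylov [CompleteSpace E] (hdef : ∀ u, ⟪A u, u⟫ = 0 → u = 0) (c : E) :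
    c ∈ closure (⋃ k, (A.krylov (A c) k : Set E)) := by
  set W := ⨆ k, A.krylov (A c) k
  have hdir := (krylov_mono A (A c)).directed_le
  have hW : Set.MapsTo A W W := fun u hu => by
    obtain ⟨k, hk⟩ := (Submodule.mem_iSup_of_directed _ hdir).mp hu
    exact Submodule.mem_iSup_of_mem (k + 1) (map_krylov_le A _ k ⟨u, hk, rfl⟩)
  rw [← Submodule.coe_iSup_of_directed _ hdir, ← Submodule.topologicalClosure_coe]
  refine mem_of_apply_mem hdef (fun u hu => ?_)
    (W.le_topologicalClosure (Submodule.mem_iSup_of_mem 1 (self_mem_krylov_succ A _ 0)))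
  rw [← SetLike.mem_coe, Submodule.topologicalClosure_coe] at hu ⊢
  exact map_mem_closure A.continuous hu hW

theorem denseRange_of_definite [CompleteSpace E] (hdef : ∀ u, ⟪A u, u⟫ = 0 → u = 0) :
    DenseRange A := by
  change Dense (LinearMap.range (A : E →ₗ[ℝ] E) : Set E)
  rw [Submodule.dense_iff_topologicalClosure_eq_top,
    Submodule.topologicalClosure_eq_top_iff, Submodule.eq_bot_iff]
  intro z hz
  exact hdef z (by rw [real_inner_comm]; exact (Submodule.mem_orthogonal' _ z).mp hz _ ⟨z, rfl⟩)

end Definite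

section ConjugateGradient

variable {E : Type*} [NormedAddCommGroup E] [InnerProductSpace ℝ E]

/-- The iterates of the conjugate gradient method for `A x = b`, in their Galerkin
characterisation. -/
structure IsCGSequence (A : E →L[ℝ] E) (b : E) (x : ℕ → E) : Prop where
  mem_krylov (k : ℕ) : x k ∈ A.krylov b k
  inner_residual_eq_zero (k : ℕ) {v : E} : v ∈ A.krylov b k → ⟪b - A (x k), v⟫ = 0

namespace IsCGSequence

variable {A : E →L[ℝ] E} {b : E} {x : ℕ → E}

theorem apply_zero (h : IsCGSequence A b x) : x 0 = 0 := by
  simpa using h.mem_krylov 0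

theorem residual_mem_krylov (h : IsCGSequence A b x) (k : ℕ) :
    b - A (x k) ∈ A.krylov b (k + 1) :=
  Submodule.sub_mem _ (self_mem_krylov_succ A b k) (map_krylov_le A b k ⟨x k, h.mem_krylov k, rfl⟩)

theorem step_mem_krylov (h : IsCGSequence A b x) (k : ℕ) :
    x (k + 1) - x k ∈ A.krylov b (k + 1) :=
  Submodule.sub_mem _ (h.mem_krylov _) (krylov_mono A b k.le_succ (h.mem_krylov k))

theorem apply_step (k : ℕ) : A (x (k + 1) - x k) = (b - A (x k)) - (b - A (x (k + 1))) := by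
  rw [map_sub]
  abel

theorem inner_apply_step_eq_zero (h : IsCGSequence A b x) {k : ℕ} {v : E}
    (hv : v ∈ A.krylov b k) : ⟪A (x (k + 1) - x k), v⟫ = 0 := by
  rw [apply_step, inner_sub_left, h.inner_residual_eq_zero k hv,
    h.inner_residual_eq_zero (k + 1) (krylov_mono A b k.le_succ hv), sub_zero]

theorem inner_apply_step_self (h : IsCGSequence A b x) (k : ℕ) :
    ⟪A (x (k + 1) - x k), x (k + 1) - x k⟫ = ⟪b - A (x k), x (k + 1) - x k⟫ := by
  rw [apply_step, inner_sub_left, h.inner_residual_eq_zero (k + 1) (h.step_mem_krylov k), sub_zero]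

theorem step_eq_zero_of_residual_eq_zero (h : IsCGSequence A b x)
    (hdef : ∀ u, ⟪A u, u⟫ = 0 → u = 0) {k : ℕ} (hr : b - A (x k) = 0) : x (k + 1) - x k = 0 :=
  hdef _ (by rw [h.inner_apply_step_self, hr, inner_zero_left])

theorem residual_eq_zero_of_step_eq_zero (h : IsCGSequence A b x) {k : ℕ}
    (hd : x (k + 1) - x k = 0) : b - A (x (k + 1)) = 0 := by
  have hr : b - A (x (k + 1)) ∈ A.krylov b (k + 1) := by
    rw [sub_eq_zero.mp hd]
    exact h.residual_mem_krylov k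
  exact inner_self_eq_zero.mp (h.inner_residual_eq_zero _ hr)

theorem exists_step_succ_eq (h : IsCGSequence A b x) (hA : (A : E →ₗ[ℝ] E).IsSymmetric)
    (hdef : ∀ u, ⟪A u, u⟫ = 0 → u = 0) {k : ℕ} (hr : b - A (x (k + 1)) ≠ 0) :
    ∃ s c : ℝ, x (k + 1 + 1) - x (k + 1) = s • (x (k + 1) - x k) + c • (b - A (x (k + 1))) := by
  have hd : x (k + 1) - x k ≠ 0 := fun hd => hr (h.residual_eq_zero_of_step_eq_zero hd)
  have hrV : b - A (x (k + 1)) ∉ A.krylov b (k + 1) := fun hmem =>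
    hr (inner_self_eq_zero.mp (h.inner_residual_eq_zero _ hmem))
  have hdV : x (k + 1) - x k ∉ A.krylov b k := fun hmem =>
    hd (hdef _ (h.inner_apply_step_eq_zero hmem))
  obtain ⟨u, hu, _, hc, hstep⟩ := Submodule.mem_sup.mp
    (krylov_succ_le_sup_of_notMem A b (h.residual_mem_krylov _) hrV (h.step_mem_krylov (k + 1)))
  obtain ⟨c, rfl⟩ := Submodule.mem_span_singleton.mp hc
  obtain ⟨u', hu', _, hs, rfl⟩ := Submodule.mem_sup.mp
    (krylov_succ_le_sup_of_notMem A b (h.step_mem_krylov k) hdV hu)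
  obtain ⟨s, rfl⟩ := Submodule.mem_span_singleton.mp hs
  suffices hu' : u' = 0 by exact ⟨s, c, by rw [← hstep, hu', zero_add]⟩
  have hstep' := h.inner_apply_step_eq_zero (k := k + 1) (krylov_mono A b k.le_succ hu')
  have hdu' := h.inner_apply_step_eq_zero hu'
  have hru' : ⟪A (b - A (x (k + 1))), u'⟫ = 0 :=
    (hA _ _).trans (h.inner_residual_eq_zero _ (map_krylov_le A b k ⟨u', hu', rfl⟩))
  rw [← hstep, map_add, map_add, map_smul, map_smul, inner_add_left, inner_add_left,
    real_inner_smul_left, real_inner_smul_left, hdu', hru'] at hstep'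
  exact hdef u' (by simpa using hstep')

theorem exists_nonneg_step_succ_eq (h : IsCGSequence A b x) (hA : A.IsPositive)
    (hdef : ∀ u, ⟪A u, u⟫ = 0 → u = 0) (k : ℕ) :
    ∃ s ≥ (0 : ℝ), ∃ c : ℝ,
      x (k + 1 + 1) - x (k + 1) = s • (x (k + 1) - x k) + c • (b - A (x (k + 1))) := by
  by_cases hr : b - A (x (k + 1)) = 0
  · exact ⟨0, le_rfl, 0, by simp [h.step_eq_zero_of_residual_eq_zero hdef hr]⟩
  obtain ⟨s, c, hsc⟩ := h.exists_step_succ_eq hA.isSymmetric hdef hr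
  refine ⟨s, ?_, c, hsc⟩
  set d := x (k + 1) - x k
  set r := b - A (x (k + 1))
  have hrd : ⟪r, d⟫ = 0 := h.inner_residual_eq_zero _ (h.step_mem_krylov k)
  have hr2 : 0 < ‖r‖ ^ 2 := pow_pos (norm_pos_iff.mpr hr) 2
  have hAd : 0 < ⟪A d, d⟫ := (hA.inner_nonneg_left d).lt_of_ne fun h0 =>
    hr (h.residual_eq_zero_of_step_eq_zero (hdef d h0.symm))
  have hc : 0 ≤ c * ‖r‖ ^ 2 := by
    have := hA.inner_nonneg_left (x (k + 1 + 1) - x (k + 1))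
    rwa [h.inner_apply_step_self, hsc, inner_add_right, real_inner_smul_right,
      real_inner_smul_right, hrd, real_inner_self_eq_norm_sq, mul_zero, zero_add] at this
  have hArd : ⟪A r, d⟫ = -‖r‖ ^ 2 := by
    rw [hA.inner_left_eq_inner_right, apply_step, inner_sub_right,
      h.inner_residual_eq_zero _ (h.residual_mem_krylov k), real_inner_self_eq_norm_sq, zero_sub]
  have hs : s * ⟪A d, d⟫ = c * ‖r‖ ^ 2 := by
    have h0 := h.inner_apply_step_eq_zero (k := k + 1) (h.step_mem_krylov k)
    rw [hsc, map_add, map_smul, map_smul, inner_add_left, real_inner_smul_left,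
      real_inner_smul_left, hArd] at h0
    linarith
  exact (mul_nonneg_iff_of_pos_right hAd).mp (hs ▸ hc)

theorem inner_step_step_nonneg (h : IsCGSequence A b x) (hA : A.IsPositive)
    (hdef : ∀ u, ⟪A u, u⟫ = 0 → u = 0) {i n : ℕ} (hin : i ≤ n) :
    0 ≤ ⟪x (i + 1) - x i, x (n + 1) - x n⟫ := by
  induction n with
  | zero =>
    obtain rfl : i = 0 := by omega
    exact real_inner_self_nonneg
  | succ n ih =>
    rcases hin.eq_or_lt with rfl | hlt
    · exact real_inner_self_nonneg
    obtain ⟨s, hs, c, hsc⟩ := h.exists_nonneg_step_succ_eq hA hdef n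
    have hir : ⟪x (i + 1) - x i, b - A (x (n + 1))⟫ = 0 := by
      rw [real_inner_comm]
      exact h.inner_residual_eq_zero _ (krylov_mono A b hlt (h.step_mem_krylov i))
    rw [hsc, inner_add_right, real_inner_smul_right, real_inner_smul_right, hir, mul_zero, add_zero]
    exact mul_nonneg hs (ih (by omega))

variable {c : E}

theorem inner_step_error_nonneg (h : IsCGSequence A (A c) x) (hA : A.IsPositive)
    (hdef : ∀ u, ⟪A u, u⟫ = 0 → u = 0) (hres : Tendsto (fun k => A (x k)) atTop (𝓝 (A c)))
    (i m : ℕ) : 0 ≤ ⟪x (i + 1) - x i, c - x (i + m)⟫ := by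
  refine Antitone.le_of_tendsto (f := fun m => ⟪x (i + 1) - x i, c - x (i + m)⟫)
    (antitone_nat_of_succ_le fun m => ?_) ?_ m
  · have hsplit : c - x (i + (m + 1)) = (c - x (i + m)) - (x (i + m + 1) - x (i + m)) := by
      rw [← add_assoc]
      abel
    rw [hsplit, inner_sub_right]
    linarith [h.inner_step_step_nonneg hA hdef (Nat.le_add_right i m)]
  · obtain ⟨t, -, ht⟩ := (krylov_apply A c (i + 1)).le (h.step_mem_krylov i)
    have hlim : Tendsto (fun m => ⟪t, A c - A (x (i + m))⟫) atTop (𝓝 0) := by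
      have hshift : Tendsto (fun m => i + m) atTop atTop :=
        (tendsto_add_atTop_nat i).congr fun m => add_comm m i
      simpa using (tendsto_const_nhds (x := t)).inner (𝕜 := ℝ)
        ((tendsto_const_nhds (x := A c)).sub (hres.comp hshift))
    refine hlim.congr fun m => ?_
    rw [← ht, coe_coe, hA.inner_left_eq_inner_right, map_sub]

theorem inner_error_nonneg (h : IsCGSequence A (A c) x) (hA : A.IsPositive)
    (hdef : ∀ u, ⟪A u, u⟫ = 0 → u = 0) (hres : Tendsto (fun k => A (x k)) atTop (𝓝 (A c)))
    (k : ℕ) : 0 ≤ ⟪x k, c - x k⟫ := by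
  calc 0 ≤ ∑ i ∈ Finset.range k, ⟪x (i + 1) - x i, c - x k⟫ :=
        Finset.sum_nonneg fun i hi => by
          simpa [Nat.add_sub_cancel' (Finset.mem_range.mp hi).le] using
            h.inner_step_error_nonneg hA hdef hres i (k - i)
    _ = ⟪x k, c - x k⟫ := by rw [← sum_inner, Finset.sum_range_sub, h.apply_zero, sub_zero]

theorem norm_le (h : IsCGSequence A (A c) x) (hA : A.IsPositive)
    (hdef : ∀ u, ⟪A u, u⟫ = 0 → u = 0) (hres : Tendsto (fun k => A (x k)) atTop (𝓝 (A c)))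
    (k : ℕ) : ‖x k‖ ≤ ‖c‖ := by
  have hx := h.inner_error_nonneg hA hdef hres k
  rw [inner_sub_right, real_inner_self_eq_norm_sq] at hx
  nlinarith [real_inner_le_norm (x k) c, norm_nonneg (x k), norm_nonneg c]

theorem tendsto [CompleteSpace E] (h : IsCGSequence A (A c) x) (hA : A.IsPositive)
    (hdef : ∀ u, ⟪A u, u⟫ = 0 → u = 0) (hres : Tendsto (fun k => A (x k)) atTop (𝓝 (A c))) :
    Tendsto x atTop (𝓝 c) := by
  have hbound : ∀ k, ‖x k - c‖ ≤ (2 * ‖c‖₊ : ℝ≥0) := fun k => by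
    push_cast
    linarith [norm_sub_le (x k) c, h.norm_le hA hdef hres k]
  have hweak : Tendsto (fun k => ⟪x k - c, c⟫) atTop (𝓝 0) := by
    refine tendsto_inner_of_dense hbound (denseRange_of_definite hdef) ?_ c
    rintro _ ⟨t, rfl⟩
    simpa [← hA.inner_left_eq_inner_right, map_sub] using
      (hres.sub_const (A c)).inner (𝕜 := ℝ) (tendsto_const_nhds (x := t))
  have hsq : ∀ k, ‖x k - c‖ ^ 2 ≤ -⟪x k - c, c⟫ := fun k => by
    have := h.inner_error_nonneg hA hdef hres k
    rw [← real_inner_self_eq_norm_sq, inner_sub_right, ← neg_sub c (x k), inner_neg_left,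
      real_inner_comm]
    linarith
  have hsq0 : Tendsto (fun k => ‖x k - c‖ ^ 2) atTop (𝓝 0) :=
    squeeze_zero (fun k => by positivity) hsq (by simpa using hweak.neg)
  rw [tendsto_iff_norm_sub_tendsto_zero]
  simpa [Real.sqrt_sq (norm_nonneg _)] using hsq0.sqrt

end IsCGSequence

end ConjugateGradient

section NormalEquation

variable {H₁ H₂ : Type*} [NormedAddCommGroup H₁] [InnerProductSpace ℝ H₁] [CompleteSpace H₁]
  [NormedAddCommGroup H₂] [InnerProductSpace ℝ H₂] [CompleteSpace H₂] (K : H₁ →L[ℝ] H₂)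

theorem eq_zero_of_inner_adjoint_comp_self_eq_zero (hK : Function.Injective K) {u : H₁}
    (hu : ⟪(adjoint K ∘L K) u, u⟫ = 0) : u = 0 := by
  rw [comp_apply, adjoint_inner_left, inner_self_eq_zero] at hu
  exact hK (hu.trans (map_zero K).symm)

theorem isCGSequence_adjoint_comp_self (c : H₁) {x : ℕ → H₁}
    (hmem : ∀ k, x k ∈ (adjoint K ∘L K).krylov ((adjoint K ∘L K) c) k)
    (hmin : ∀ k, ∀ ψ ∈ (adjoint K ∘L K).krylov ((adjoint K ∘L K) c) k,
      ‖K (x k) - K c‖ ≤ ‖K ψ - K c‖) :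
    IsCGSequence (adjoint K ∘L K) ((adjoint K ∘L K) c) x where
  mem_krylov := hmem
  inner_residual_eq_zero k _ hv := by
    rw [← map_sub, comp_apply, adjoint_inner_left, map_sub]
    exact inner_sub_apply_eq_zero_of_forall_norm_le (K : H₁ →ₗ[ℝ] H₂) (hmem k) (hmin k) hv

theorem tendsto_of_minimizes_on_krylov (hK : Function.Injective K) (c : H₁) {x : ℕ → H₁}
    (hmem : ∀ k, x k ∈ (adjoint K ∘L K).krylov ((adjoint K ∘L K) c) k)
    (hmin : ∀ k, ∀ ψ ∈ (adjoint K ∘L K).krylov ((adjoint K ∘L K) c) k,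
      ‖K (x k) - K c‖ ≤ ‖K ψ - K c‖) :
    Tendsto x atTop (𝓝 c) := by
  have hdef : ∀ u, ⟪(adjoint K ∘L K) u, u⟫ = 0 → u = 0 := fun _ =>
    eq_zero_of_inner_adjoint_comp_self_eq_zero K hK
  have hKx : Tendsto (K ∘ x) atTop (𝓝 (K c)) :=
    tendsto_comp_of_forall_dist_le K.continuous.continuousAt
      (fun _ _ hkm => krylov_mono _ _ hkm) (mem_closure_iUnion_krylov hdef c)
      (Eventually.of_forall fun k ψ hψ => by simpa only [dist_eq_norm] using hmin k ψ hψ)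
  exact (isCGSequence_adjoint_comp_self K c hmem hmin).tendsto (isPositive_adjoint_comp_self K)
    hdef (((adjoint K).continuous.tendsto _).comp hKx)

end NormalEquation

end ContinuousLinearMap

theorem stmt_9_general
    {H₁ H₂ : Type*}
    [NormedAddCommGroup H₁] [InnerProductSpace ℝ H₁] [CompleteSpace H₁]
    [NormedAddCommGroup H₂] [InnerProductSpace ℝ H₂] [CompleteSpace H₂]
    (K : H₁ →L[ℝ] H₂) (hinj : Function.Injective K)
    (φdag : H₁) (f : H₂) (hf : f = K φdag)
    (φ : ℕ → H₁)
    (hmin : ∀ k : ℕ, 1 ≤ k →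
      φ k ∈ Submodule.span ℝ
        ((fun j => ((adjoint K ∘L K) ^ j) (adjoint K f)) '' Set.Iio k) ∧
      ∀ ψ ∈ Submodule.span ℝ
          ((fun j => ((adjoint K ∘L K) ^ j) (adjoint K f)) '' Set.Iio k),
        ‖K (φ k) - f‖ ≤ ‖K ψ - f‖) :
    Tendsto φ atTop (nhds φdag) := by
  subst hf
  -- `φ 0` is unconstrained, while the minimizer over `𝕂_0 = 0` is `0`.
  set x : ℕ → H₁ := Function.update φ 0 0
  have hxφ : ∀ k, 1 ≤ k → x k = φ k := fun k hk => Function.update_of_ne (by omega) _ _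
  have hx : ∀ k, x k ∈ (adjoint K ∘L K).krylov ((adjoint K ∘L K) φdag) k ∧
      ∀ ψ ∈ (adjoint K ∘L K).krylov ((adjoint K ∘L K) φdag) k,
        ‖K (x k) - K φdag‖ ≤ ‖K ψ - K φdag‖ := fun k => by
    rcases Nat.eq_zero_or_pos k with rfl | hk
    · simp_all [x]
    · rw [hxφ k hk]
      exact hmin k hk
  refine (tendsto_of_minimizes_on_krylov K hinj φdag (fun k => (hx k).1)
    fun k => (hx k).2).congr' ?_
  filter_upwards [eventually_ge_atTop 1] with k hk using hxφ k hk

/-- let `K` be a compact injective continuous linear operator, `f = K φ†`,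
and for each `k ≥ 1` let `φ k` be a minimizer of `‖K φ - f‖` over the Krylov subspace
`𝕂_k = span {(K*K)^j (K* f) : 0 ≤ j ≤ k−1}`. Then `φ k → φ†` in `H₁`. -/
theorem stmt_9
    {H₁ H₂ : Type*}
    [NormedAddCommGroup H₁] [InnerProductSpace ℝ H₁] [CompleteSpace H₁]
    [NormedAddCommGroup H₂] [InnerProductSpace ℝ H₂] [CompleteSpace H₂]
    (K : H₁ →L[ℝ] H₂) (hK : IsCompactOperator K) (hinj : Function.Injective K)
    (φdag : H₁) (f : H₂) (hf : f = K φdag)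
    (φ : ℕ → H₁)
    (hmin : ∀ k : ℕ, 1 ≤ k →
      φ k ∈ Submodule.span ℝ
        ((fun j => ((adjoint K ∘L K) ^ j) (adjoint K f)) '' Set.Iio k) ∧
      ∀ ψ ∈ Submodule.span ℝ
          ((fun j => ((adjoint K ∘L K) ^ j) (adjoint K f)) '' Set.Iio k),
        ‖K (φ k) - f‖ ≤ ‖K ψ - f‖) :
    Tendsto φ atTop (nhds φdag) :=
  stmt_9_general K hinj φdag f hf φ hmin
end

section
/- Let p > 1 and C_b > 0 be real numbers. Then there exists a constant C > 0 (one may take C = sqrt(2π)·e^{14.5}·C_b^{1/p}·(p²/(p−1))^p) such that for every integer k ≥ 1 and every real μ with 0 < μ < 1 and μ ≤ C_b·exp(−p·k·log k), one has (k+3)! ≤ C·μ^{−1}·(log(1/μ))^{−p}. -/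
/-!
Write `t = log (1/μ)`, so that the right-hand side is `C · exp (t - p log t)`. The hypothesis on
`μ` gives `t ≥ p k log k - log C_b`, while `log (k+3)! ≤ k log k + 15 k ≤ (1 + ε) k log k + L_ε`
for every `ε > 0`. Taking `ε = (p-1)/2` and `θ = (1+ε)/p < 1`, the elementary bound
`p log t ≤ (1-θ) t + O_p(1)` shows `t - p log t ≥ θ t - O_p(1) ≥ (1+ε) k log k - O_{p,C_b}(1)`.
-/

open Real

namespace Real

theorem log_le_mul_sub_one_sub_log {a t : ℝ} (ha : 0 < a) (ht : 0 < t) :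
    log t ≤ a * t - 1 - log a := by
  have h := log_le_sub_one_of_pos (mul_pos ha ht)
  rw [log_mul ha.ne' ht.ne'] at h
  linarith

/-- The Fenchel–Young inequality for `x ↦ x log x`, whose conjugate is `y ↦ exp (y - 1)`. -/
theorem mul_sub_log_le_exp {x : ℝ} (y : ℝ) (hx : 0 < x) : x * (y - log x) ≤ exp (y - 1) := by
  have h := log_le_mul_sub_one_sub_log (inv_pos.mpr hx) (exp_pos (y - 1))
  rw [log_exp, log_inv] at h
  have h' : y - log x ≤ x⁻¹ * exp (y - 1) := by linarith
  calc x * (y - log x) ≤ x * (x⁻¹ * exp (y - 1)) := mul_le_mul_of_nonneg_left h' hx.le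
    _ = exp (y - 1) := by field_simp

theorem mul_add_le_sub_mul_log {p θ t : ℝ} (hp : 0 < p) (hθ : θ < 1) (ht : 0 < t) :
    θ * t + p * (1 + log ((1 - θ) / p)) ≤ t - p * log t := by
  have h := log_le_mul_sub_one_sub_log (div_pos (sub_pos.mpr hθ) hp) ht
  have h' := mul_le_mul_of_nonneg_left h hp.le
  have hp' : p * ((1 - θ) / p * t) = (1 - θ) * t := by field_simp
  nlinarith

end Real

theorem log_factorial_add_three_le {k : ℕ} (hk : 1 ≤ k) :
    log ((k + 3).factorial : ℝ) ≤ k * log k + 15 * k := by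
  have hk1 : (1 : ℝ) ≤ k := by exact_mod_cast hk
  have hk0 : (0 : ℝ) < k := by linarith
  have hpow : log ((k + 3).factorial : ℝ) ≤ (k + 3) * log (k + 3) := by
    have h := log_le_log (by positivity) (by exact_mod_cast Nat.factorial_le_pow (k + 3) :
      ((k + 3).factorial : ℝ) ≤ ((k + 3 : ℕ) : ℝ) ^ (k + 3))
    rwa [log_pow, Nat.cast_add, Nat.cast_ofNat] at h
  have hlog : log (k + 3) ≤ log k + 3 := by
    have h4 : log (4 : ℝ) ≤ 3 := by linarith [log_le_sub_one_of_pos (by norm_num : (0 : ℝ) < 4)]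
    calc log (k + 3) ≤ log (4 * k) := log_le_log (by linarith) (by linarith)
      _ = log 4 + log k := log_mul (by norm_num) hk0.ne'
      _ ≤ log k + 3 := by linarith
  have hlogk : log k ≤ k := by linarith [log_le_sub_one_of_pos hk0]
  nlinarith [mul_le_mul_of_nonneg_left hlog (by linarith : (0 : ℝ) ≤ k + 3)]

theorem log_factorial_add_three_le_one_add_mul {ε : ℝ} (hε : 0 < ε) {k : ℕ} (hk : 1 ≤ k) :
    log ((k + 3).factorial : ℝ) ≤ (1 + ε) * (k * log k) + ε * exp (15 / ε - 1) := by
  have hk0 : (0 : ℝ) < k := by exact_mod_cast hk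
  have h := mul_le_mul_of_nonneg_left (mul_sub_log_le_exp (15 / ε) hk0) hε.le
  have h15 : ε * (k * (15 / ε - log k)) = 15 * k - ε * (k * log k) := by field_simp
  linarith [log_factorial_add_three_le hk]

theorem stmt_10_general (p C_b : ℝ) (hp : 1 < p) :
    ∃ C : ℝ, 0 < C ∧
      ∀ k : ℕ, 1 ≤ k → ∀ μ : ℝ, 0 < μ → μ < 1 →
        μ ≤ C_b * Real.exp (-(p * k * Real.log k)) →
        (Nat.factorial (k + 3) : ℝ) ≤ C * μ⁻¹ * Real.log (1 / μ) ^ (-p) := by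
  set ε := (p - 1) / 2
  set θ := (1 + ε) / p
  have hp0 : 0 < p := by linarith
  have hε : 0 < ε := by simp only [ε]; linarith
  have hθ : θ < 1 := (div_lt_one hp0).mpr (by simp only [ε]; linarith)
  have hθp : θ * p = 1 + ε := div_mul_cancel₀ _ hp0.ne'
  set c := ε * exp (15 / ε - 1) + θ * log C_b - p * (1 + log ((1 - θ) / p))
  refine ⟨exp c, exp_pos c, fun k hk μ hμ0 hμ1 hμ ↦ ?_⟩
  have hCb : 0 < C_b := pos_of_mul_pos_left (hμ0.trans_le hμ) (exp_pos _).le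
  set t := log (1 / μ)
  have ht : 0 < t := log_pos ((one_lt_div hμ0).mpr hμ1)
  have hkt : p * k * log k - log C_b ≤ t := by
    have h := log_le_log hμ0 hμ
    rw [log_mul hCb.ne' (exp_pos _).ne', log_exp] at h
    simp only [t, one_div, log_inv]
    linarith
  have hrhs : log (exp c * μ⁻¹ * t ^ (-p)) = c + t - p * log t := by
    rw [log_mul (by positivity) (by positivity), log_mul (by positivity) (by positivity),
      log_exp, log_rpow ht, ← one_div]
    ring
  rw [← log_le_log_iff (by positivity) (by positivity), hrhs]
  have hθt : θ * (p * k * log k - log C_b) ≤ θ * t :=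
    mul_le_mul_of_nonneg_left hkt (div_pos (by linarith) hp0).le
  have hθk : θ * (p * k * log k) = (1 + ε) * (k * log k) := by rw [← hθp]; ring
  linarith [log_factorial_add_three_le_one_add_mul hε hk, mul_add_le_sub_mul_log hp0 hθ ht]

/-- for `p > 1`, `C_b > 0`, there is a constant `C > 0` (one may take
`C = √(2π)·e^{14.5}·C_b^{1/p}·(p²/(p−1))^p`) such that for every `k ≥ 1` and every
`μ ∈ (0,1)` with `μ ≤ C_b·exp(−p·k·log k)`, one has
`(k+3)! ≤ C·μ⁻¹·(log(1/μ))^{−p}`. -/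
theorem stmt_10 (p C_b : ℝ) (hp : 1 < p) (hCb : 0 < C_b) :
    ∃ C : ℝ, 0 < C ∧
      ∀ k : ℕ, 1 ≤ k → ∀ μ : ℝ, 0 < μ → μ < 1 →
        μ ≤ C_b * Real.exp (-(p * k * Real.log k)) →
        (Nat.factorial (k + 3) : ℝ) ≤ C * μ⁻¹ * Real.log (1 / μ) ^ (-p) :=
  stmt_10_general p C_b hp
end

section
/- Let p > 1, ν > 0, C_a > 0 be real numbers, let ρ ∈ (0,1), and let σ be a real number with σ ≥ p/(2ν·log(1/ρ)). Set C₈ = 1 + max(log(1/C_a), 0). Then for every integer k ≥ 0 and every real μ with 0 < μ < 1 and μ ≥ C_a·exp(−exp((k+1)/σ)), one has ρ^{2ν(k+1)} ≤ C₈^p·(log(1/μ))^{−p}. -/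
/-!
Write `E = exp((k+1)/σ)`. The choice of `σ` gives `ρ^{2ν(k+1)} = exp(-2ν(k+1)·log(1/ρ)) ≤ E^{-p}`,
while `μ ≥ C_a·e^{-E}` gives `log(1/μ) ≤ E + log(1/C_a) ≤ C₈·E` because `E ≥ 1`.
Raising the latter to the power `-p` turns it into `E^{-p} ≤ C₈^p·log(1/μ)^{-p}`.
-/

open Real

lemma rpow_mul_le_exp_div_rpow_neg {p a ρ σ t : ℝ} (hp : 0 < p) (ha : 0 < a)
    (hρ0 : 0 < ρ) (hρ1 : ρ < 1) (ht : 0 ≤ t) (hσ : p / (a * log (1 / ρ)) ≤ σ) :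
    ρ ^ (a * t) ≤ exp (t / σ) ^ (-p) := by
  have hL : 0 < log (1 / ρ) := log_pos (one_lt_one_div hρ0 hρ1)
  have haL : 0 < a * log (1 / ρ) := mul_pos ha hL
  have hσ0 : 0 < σ := (div_pos hp haL).trans_le hσ
  have hpσ : p / σ ≤ a * log (1 / ρ) := by
    rw [div_le_iff₀ haL] at hσ
    rw [div_le_iff₀ hσ0]
    linarith
  rw [← exp_mul, rpow_def_of_pos hρ0, exp_le_exp]
  calc log ρ * (a * t) = -(a * log (1 / ρ)) * t := by rw [one_div, log_inv]; ring
    _ ≤ -(p / σ) * t := mul_le_mul_of_nonneg_right (neg_le_neg hpσ) ht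
    _ = t / σ * -p := by ring

lemma log_one_div_le_of_mul_exp_neg_le {C E μ : ℝ} (hC : 0 < C) (hμ : C * exp (-E) ≤ μ) :
    log (1 / μ) ≤ E + log (1 / C) := by
  have h := log_le_log (by positivity) hμ
  rw [log_mul hC.ne' (exp_ne_zero _), log_exp] at h
  simp only [one_div, log_inv]
  linarith

lemma rpow_neg_le_rpow_mul_rpow_neg {C E L p : ℝ} (hC : 0 < C) (hL : 0 < L) (hp : 0 ≤ p)
    (hLE : L ≤ C * E) :
    E ^ (-p) ≤ C ^ p * L ^ (-p) := by
  have hLC : L / C ≤ E := by rwa [div_le_iff₀' hC]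
  calc E ^ (-p) ≤ (L / C) ^ (-p) := rpow_le_rpow_of_nonpos (div_pos hL hC) hLC (neg_nonpos.2 hp)
    _ = C ^ p * L ^ (-p) := by
      rw [div_rpow hL.le hC.le, rpow_neg hC.le, div_inv_eq_mul, mul_comm]

/-- for `p > 1`, `ν > 0`, `C_a > 0`, `ρ ∈ (0,1)` and
`σ ≥ p/(2ν·log(1/ρ))`, setting `C₈ = 1 + max(log(1/C_a), 0)`, for every `k : ℕ` and
every `μ ∈ (0,1)` with `μ ≥ C_a·exp(−exp((k+1)/σ))` one has
`ρ^{2ν(k+1)} ≤ C₈^p·(log(1/μ))^{−p}`. -/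
theorem stmt_11 (p ν C_a ρ σ : ℝ)
    (hp : 1 < p) (hν : 0 < ν) (hCa : 0 < C_a)
    (hρ0 : 0 < ρ) (hρ1 : ρ < 1)
    (hσ : p / (2 * ν * Real.log (1 / ρ)) ≤ σ) :
    ∀ k : ℕ, ∀ μ : ℝ, 0 < μ → μ < 1 →
      C_a * Real.exp (-Real.exp ((k + 1) / σ)) ≤ μ →
      ρ ^ (2 * ν * (k + 1) : ℝ) ≤
        (1 + max (Real.log (1 / C_a)) 0) ^ p * Real.log (1 / μ) ^ (-p) := by
  intro k μ hμ0 hμ1 hμ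
  have hp0 : 0 < p := zero_lt_one.trans hp
  have hσ0 : 0 < σ :=
    (div_pos hp0 (by have := log_pos (one_lt_one_div hρ0 hρ1); positivity)).trans_le hσ
  set E := exp ((k + 1) / σ)
  set M := max (log (1 / C_a)) 0
  have hE : 1 ≤ E := one_le_exp (by positivity)
  have hM : 0 ≤ M := le_max_right _ _
  have hlogμ : log (1 / μ) ≤ (1 + M) * E := by
    have := log_one_div_le_of_mul_exp_neg_le hCa hμ
    nlinarith [le_max_left (log (1 / C_a)) 0]
  calc ρ ^ (2 * ν * (k + 1) : ℝ) ≤ E ^ (-p) :=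
        rpow_mul_le_exp_div_rpow_neg hp0 (by positivity) hρ0 hρ1 (by positivity) hσ
    _ ≤ (1 + M) ^ p * log (1 / μ) ^ (-p) :=
        rpow_neg_le_rpow_mul_rpow_neg (by positivity) (log_pos (one_lt_one_div hμ0 hμ1))
          hp0.le hlogμ
end

section
/- For every real number p > 1 and every real number x > 1, the strict inequality ((p−1)/p)·log x > p·log(log x) − p·log(p²/(p−1)) holds. -/
open Real

theorem log_lt_div_add_log {a y : ℝ} (ha : 0 < a) (hy : 0 < y) : log y < y / a + log a := by
  have h := log_le_sub_one_of_pos (div_pos hy ha)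
  rw [log_div hy.ne' ha.ne'] at h
  linarith

/-- for every `p > 1` and `x > 1`,
`((p−1)/p)·log x > p·log(log x) − p·log(p²/(p−1))`. -/
theorem stmt_12 (p x : ℝ) (hp : 1 < p) (hx : 1 < x) :
    (p - 1) / p * Real.log x >
      p * Real.log (Real.log x) - p * Real.log (p ^ 2 / (p - 1)) := by
  have hp0 : 0 < p := by linarith
  have hp1 : 0 < p - 1 := by linarith
  have hbound := log_lt_div_add_log (a := p ^ 2 / (p - 1)) (by positivity) (log_pos hx)
  calc p * log (log x) - p * log (p ^ 2 / (p - 1))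
      = p * (log (log x) - log (p ^ 2 / (p - 1))) := by ring
    _ < p * (log x / (p ^ 2 / (p - 1))) := mul_lt_mul_of_pos_left (by linarith) hp0
    _ = (p - 1) / p * log x := by field_simp
end
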